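/- For every n ∈ ℕ, the number of equivalence classes of W(n) under the relation ∼ equals h_n'', the number of normalized set systems of weight n. -/

import Mathlib

/-- The weight of a set system: the sum of edge sizes, counted with multiplicity. -/
def sysWeight (H : Multiset (Finset ℕ)) : ℕ := (H.map Finset.card).sum

/-- A set system is normalized if all its edges are nonempty and its vertex set
(the union of its edges) equals `{1, …, m}` for some `m`. -/
def IsNormalized (H : Multiset (Finset ℕ)) : Prop :=
  (∀ E ∈ H, E.Nonempty) ∧ ∃ m : ℕ, H.sup = Finset.Icc 1 m

/-- `hpp n` = `hₙ''`, the number of normalized set systems (multisets of edges allowed)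
of weight `n`. -/
noncomputable def hpp (n : ℕ) : ℕ :=
  Nat.card {H : Multiset (Finset ℕ) // IsNormalized H ∧ sysWeight H = n}

/-- `hp n` = `hₙ'`, the number of simple (no repeated edges) normalized set systems
of weight `n`. -/
noncomputable def hp (n : ℕ) : ℕ :=
  Nat.card {H : Multiset (Finset ℕ) // IsNormalized H ∧ sysWeight H = n ∧ H.Nodup}

/-- The `n`-th Bell number: the number of partitions (equivalence relations)
of an `n`-element set. -/
noncomputable def bell (n : ℕ) : ℕ := Nat.card (Setoid (Fin n))

/-- Two partitions `P`, `Q` of `{1,…,n}` are orthogonal if `|A ∩ B| ≤ 1` for all blocks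
`A` of `P` and `B` of `Q`. -/
def OrthogonalSetoids {n : ℕ} (P Q : Setoid (Fin n)) : Prop :=
  ∀ A ∈ P.classes, ∀ B ∈ Q.classes, (A ∩ B).ncard ≤ 1

/-- `Q` is an interval partition if each of its blocks is a set of consecutive
elements. -/
def IsIntervalSetoid {n : ℕ} (Q : Setoid (Fin n)) : Prop :=
  ∀ B ∈ Q.classes, ∀ x y z : Fin n, x ∈ B → z ∈ B → x ≤ y → y ≤ z → y ∈ B

/-- `W n`: the set of pairs `(Q, P)` of orthogonal partitions of `{1,…,n}` with `Q` an
interval partition. -/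
def Wpairs (n : ℕ) : Type :=
  {QP : Setoid (Fin n) × Setoid (Fin n) //
    IsIntervalSetoid QP.1 ∧ OrthogonalSetoids QP.2 QP.1}

/-- The relation `∼` on `W n`: `(Q₁,P₁) ∼ (Q₂,P₂)` iff `Q₁ = Q₂` and there is a
bijection `f : P₁ → P₂` between the blocks such that every block `A` of `P₁` intersects
exactly the same blocks of `Q₁` as `f A` does. -/
def simRel {n : ℕ} (p q : Wpairs n) : Prop :=
  p.1.1 = q.1.1 ∧
  ∃ f : p.1.2.classes → q.1.2.classes, Function.Bijective f ∧
    ∀ A : p.1.2.classes, ∀ B ∈ p.1.1.classes,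
      ((A : Set (Fin n)) ∩ B).Nonempty ↔ ((f A : Set (Fin n)) ∩ B).Nonempty

/-!
Number the blocks of the interval partition `Q` from left to right by `1, …, m`. A block `A` of
`P` gives the edge of indices of the blocks of `Q` that `A` meets, of size `|A|` by orthogonality;
these edges form a normalized set system of weight `n`, and `∼` identifies two pairs exactly when
they give the same system. Indeed the system determines `Q`, since its vertex degrees are the
sizes of the blocks of `Q` from left to right, and then its edges match the blocks of `P` up to a
bijection. Conversely a normalized set system of weight `n` comes from the pair obtained by
listing its `n` incidences `(vertex, edge)` lexicographically and grouping them by vertex into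
`Q` and by edge into `P`.
-/

open Finset

theorem Multiset.map_univ_val_eq_iff_exists_equiv {α β γ : Type*} [Fintype α] [Fintype β]
    (F : α → γ) (G : β → γ) :
    univ.val.map F = univ.val.map G ↔ ∃ e : α ≃ β, ∀ a, G (e a) = F a := by
  classical
  constructor
  · intro h
    have hfiber (c : γ) : Fintype.card {a // F a = c} = Fintype.card {b // G b = c} := by
      simpa [Fintype.card_subtype, Multiset.count_map, Finset.card, Finset.filter_val, eq_comm]
        using congrArg (Multiset.count c) h
    exact ⟨.ofFiberEquiv fun c => Fintype.equivOfCardEq (hfiber c), Equiv.ofFiberEquiv_map _⟩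
  · rintro ⟨e, he⟩
    rw [← Multiset.map_univ_val_equiv e, Multiset.map_map]
    exact Multiset.map_congr rfl fun a _ => (he a).symm

theorem Monotone.eq_of_card_fiber_eq {n : ℕ} {α : Type*} [LinearOrder α] {f g : Fin n → α}
    (hf : Monotone f) (hg : Monotone g)
    (h : ∀ a, #{x | f x = a} = #{x | g x = a}) : f = g := by
  classical
  have hmap : univ.val.map f = univ.val.map g := by
    ext a
    simpa only [Multiset.count_map, Finset.card, Finset.filter_val, eq_comm] using h a
  rw [Fin.univ_val_map, Fin.univ_val_map, Multiset.coe_eq_coe] at hmap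
  exact List.ofFn_injective (hmap.eq_of_sortedLE hf.sortedLE_ofFn hg.sortedLE_ofFn)

namespace Setoid

open scoped Classical

theorem quotientEquivClasses_mk_eq_iff {α : Type*} (r : Setoid α) (x : α) (A : r.classes) :
    r.quotientEquivClasses ⟦x⟧ = A ↔ x ∈ (A : Set α) := by
  obtain ⟨A, hA⟩ := A
  rw [Subtype.ext_iff, quotientEquivClasses_mk_eq]
  exact ⟨fun h => h ▸ r.refl x,
    fun hx => eq_of_mem_classes (r.mem_classes x) (r.refl x) hA hx⟩

theorem sum_card_classes {α : Type*} [Fintype α] (r : Setoid α) [Fintype r.classes] :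
    ∑ A : r.classes, #{x | x ∈ (A : Set α)} = Fintype.card α := by
  rw [← card_univ, card_eq_sum_card_fiberwise (f := fun x => r.quotientEquivClasses ⟦x⟧)
    (t := univ) fun _ _ => mem_univ _]
  simp only [quotientEquivClasses_mk_eq_iff]

theorem exists_equiv_classes_ker {α ι : Type*} {g : α → ι} (hg : Function.Surjective g) :
    ∃ e : ι ≃ (ker g).classes, ∀ i, (e i : Set α) = g ⁻¹' {i} := by
  let toClass (i : ι) : (ker g).classes :=
    ⟨g ⁻¹' {i}, by obtain ⟨x, rfl⟩ := hg i; exact ⟨x, rfl⟩⟩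
  have hbij : Function.Bijective toClass := by
    refine ⟨fun i i' h => ?_, fun ⟨_, x, hx⟩ => ⟨g x, Subtype.ext hx.symm⟩⟩
    obtain ⟨x, rfl⟩ := hg i
    exact (congrArg (x ∈ ·) (congrArg Subtype.val h)).mp rfl
  exact ⟨.ofBijective toClass hbij, fun _ => rfl⟩

end Setoid

theorem orthogonalSetoids_iff {n : ℕ} {P Q : Setoid (Fin n)} :
    OrthogonalSetoids P Q ↔ ∀ x y, P x y → Q x y → x = y := by
  constructor
  · intro hO x y hP hQ
    have h := hO _ (P.mem_classes y) _ (Q.mem_classes y)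
    rw [Set.ncard_le_one (Set.toFinite _)] at h
    exact h x ⟨hP, hQ⟩ y ⟨P.refl y, Q.refl y⟩
  · rintro h A ⟨a, rfl⟩ B ⟨b, rfl⟩
    rw [Set.ncard_le_one (Set.toFinite _)]
    rintro x ⟨hxa, hxb⟩ y ⟨hya, hyb⟩
    exact h x y (P.trans hxa (P.symm hya)) (Q.trans hxb (Q.symm hyb))

theorem isIntervalSetoid_ker {n : ℕ} {α : Type*} [PartialOrder α] {f : Fin n → α}
    (hf : Monotone f) : IsIntervalSetoid (Setoid.ker f) := by
  rintro B ⟨b, rfl⟩ x y z (hx : f x = f b) (hz : f z = f b) hxy hyz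
  exact le_antisymm ((hf hyz).trans_eq hz) (hx ▸ hf hxy)

theorem IsIntervalSetoid.rel_of_le_of_le {n : ℕ} {Q : Setoid (Fin n)} (hQ : IsIntervalSetoid Q)
    {x y z : Fin n} (hxz : Q x z) (hxy : x ≤ y) (hyz : y ≤ z) : Q x y :=
  Q.symm (hQ _ (Q.mem_classes x) x y z (Q.refl x) (Q.symm hxz) hxy hyz)

namespace Setoid

open scoped Classical

variable {n : ℕ} (Q : Setoid (Fin n))

/-- For an interval partition, the position (starting at `1`) of the block containing `x`. -/
noncomputable def blockIndex (x : Fin n) : ℕ := #((Iic x).image (Quotient.mk Q))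

theorem blockIndex_mono : Monotone Q.blockIndex :=
  fun _ _ h => card_le_card (image_subset_image (Iic_subset_Iic.2 h))

theorem one_le_blockIndex (x : Fin n) : 1 ≤ Q.blockIndex x :=
  card_pos.2 ⟨_, mem_image_of_mem _ (mem_Iic.2 le_rfl)⟩

theorem blockIndex_le_card_blocks (x : Fin n) :
    Q.blockIndex x ≤ #(univ.image (Quotient.mk Q)) :=
  card_le_card (image_subset_image (subset_univ _))

noncomputable def blocksMeeting (A : Set (Fin n)) : Finset ℕ :=
  (univ.filter (· ∈ A)).image Q.blockIndex

theorem mem_blocksMeeting {A : Set (Fin n)} {j : ℕ} :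
    j ∈ Q.blocksMeeting A ↔ ∃ x ∈ A, Q.blockIndex x = j := by
  simp [blocksMeeting]

variable {Q}

theorem _root_.IsIntervalSetoid.blockIndex_eq_iff (hQ : IsIntervalSetoid Q) {x y : Fin n} :
    Q.blockIndex x = Q.blockIndex y ↔ Q x y := by
  wlog hxy : x ≤ y generalizing x y
  · rw [eq_comm, this (le_of_not_ge hxy)]
    exact ⟨Q.symm, Q.symm⟩
  have hsub : (Iic x).image (Quotient.mk Q) ⊆ (Iic y).image (Quotient.mk Q) :=
    image_subset_image (Iic_subset_Iic.2 hxy)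
  constructor
  · intro h
    have hmem : Quotient.mk Q y ∈ (Iic x).image (Quotient.mk Q) :=
      eq_of_subset_of_card_le hsub h.ge ▸ mem_image_of_mem _ (mem_Iic.2 le_rfl)
    obtain ⟨z, hzx, hzy⟩ := mem_image.1 hmem
    replace hzy : Q z y := Quotient.exact hzy
    exact Q.trans (Q.symm (hQ.rel_of_le_of_le hzy (mem_Iic.1 hzx) hxy)) hzy
  · intro h
    refine congrArg card (hsub.antisymm fun c hc => ?_)
    obtain ⟨z, hzy, rfl⟩ := mem_image.1 hc
    rcases le_total z x with hzx | hxz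
    · exact mem_image_of_mem _ (mem_Iic.2 hzx)
    · rw [Quotient.sound (Q.symm (hQ.rel_of_le_of_le h hxz (mem_Iic.1 hzy)))]
      exact mem_image_of_mem _ (mem_Iic.2 le_rfl)

theorem blockIndex_ker {f : Fin n → ℕ} {m : ℕ} (hf : Monotone f)
    (hrange : univ.image f = Icc 1 m) : (ker f).blockIndex = f := by
  funext x
  have hIic : (Iic x).image f = Icc 1 (f x) := by
    have hf_mem (y : Fin n) : f y ∈ Icc 1 m := hrange ▸ mem_image_of_mem f (mem_univ y)
    ext j
    simp only [mem_image, mem_Iic, mem_Icc]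
    constructor
    · rintro ⟨y, hyx, rfl⟩
      exact ⟨(mem_Icc.1 (hf_mem y)).1, hf hyx⟩
    · rintro ⟨h1, hj⟩
      have hjm : j ∈ Icc 1 m := mem_Icc.2 ⟨h1, hj.trans (mem_Icc.1 (hf_mem x)).2⟩
      obtain ⟨y, -, rfl⟩ := mem_image.1 (hrange ▸ hjm)
      rcases le_total y x with hyx | hxy
      · exact ⟨y, hyx, rfl⟩
      · exact ⟨x, le_rfl, le_antisymm (hf hxy) hj⟩
  rw [blockIndex, ← card_image_of_injective _ (kerLift_injective f), image_image]
  exact (congrArg card hIic).trans (Nat.card_Icc 1 (f x))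

theorem _root_.IsIntervalSetoid.image_blockIndex_univ (hQ : IsIntervalSetoid Q) :
    univ.image Q.blockIndex = Icc 1 #(univ.image (Quotient.mk Q)) := by
  refine eq_of_subset_of_card_le (fun j hj => ?_) ?_
  · obtain ⟨x, -, rfl⟩ := mem_image.1 hj
    exact mem_Icc.2 ⟨Q.one_le_blockIndex x, Q.blockIndex_le_card_blocks x⟩
  · let index : Quotient Q → ℕ := Quotient.lift Q.blockIndex fun _ _ => hQ.blockIndex_eq_iff.2
    have hindex : Function.Injective index := by
      rintro ⟨x⟩ ⟨y⟩ h
      exact Quotient.sound (hQ.blockIndex_eq_iff.1 h)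
    rw [Nat.card_Icc, add_tsub_cancel_right, ← card_image_of_injective _ hindex, image_image]
    rfl

theorem _root_.IsIntervalSetoid.inter_nonempty_iff_mem_blocksMeeting (hQ : IsIntervalSetoid Q)
    (A : Set (Fin n)) (b : Fin n) :
    (A ∩ {x | Q x b}).Nonempty ↔ Q.blockIndex b ∈ Q.blocksMeeting A := by
  simp only [mem_blocksMeeting, hQ.blockIndex_eq_iff]
  rfl

theorem _root_.IsIntervalSetoid.blocksMeeting_eq_iff (hQ : IsIntervalSetoid Q)
    (A A' : Set (Fin n)) : Q.blocksMeeting A = Q.blocksMeeting A' ↔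
      ∀ B ∈ Q.classes, (A ∩ B).Nonempty ↔ (A' ∩ B).Nonempty := by
  constructor
  · rintro h B ⟨b, rfl⟩
    rw [hQ.inter_nonempty_iff_mem_blocksMeeting, hQ.inter_nonempty_iff_mem_blocksMeeting, h]
  · intro h
    ext j
    by_cases hj : ∃ b, Q.blockIndex b = j
    · obtain ⟨b, rfl⟩ := hj
      rw [← hQ.inter_nonempty_iff_mem_blocksMeeting, ← hQ.inter_nonempty_iff_mem_blocksMeeting,
        h _ (Q.mem_classes b)]
    · push Not at hj
      simp [mem_blocksMeeting, hj]

theorem card_blocksMeeting {P : Setoid (Fin n)} (hQ : IsIntervalSetoid Q)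
    (hO : OrthogonalSetoids P Q) {A : Set (Fin n)} (hA : A ∈ P.classes) :
    #(Q.blocksMeeting A) = #{x | x ∈ A} := by
  obtain ⟨a, rfl⟩ := hA
  refine card_image_of_injOn fun x hx y hy h => orthogonalSetoids_iff.1 hO x y ?_ ?_
  · simp only [coe_filter, mem_univ, true_and] at hx hy
    exact P.trans hx (P.symm hy)
  · exact hQ.blockIndex_eq_iff.1 h

end Setoid

theorem sysWeight_map_univ {ι : Type*} [Fintype ι] (E : ι → Finset ℕ) :
    sysWeight (univ.val.map E) = ∑ i, #(E i) := by
  rw [sysWeight, Multiset.map_map]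
  rfl

theorem isNormalized_map_univ_iff {ι : Type*} [Fintype ι] (E : ι → Finset ℕ) :
    IsNormalized (univ.val.map E) ↔ (∀ i, (E i).Nonempty) ∧ ∃ m, univ.sup E = Icc 1 m := by
  simp [IsNormalized, Finset.sup_def]

namespace Wpairs

open scoped Classical

variable {n : ℕ}

noncomputable def edgeSystem (p : Wpairs n) : Multiset (Finset ℕ) :=
  univ.val.map fun A : p.1.2.classes => p.1.1.blocksMeeting A

theorem sysWeight_edgeSystem (p : Wpairs n) : sysWeight p.edgeSystem = n := by
  rw [edgeSystem, sysWeight_map_univ]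
  simp_rw [Setoid.card_blocksMeeting p.2.1 p.2.2 (Subtype.prop _)]
  rw [Setoid.sum_card_classes, Fintype.card_fin]

theorem isNormalized_edgeSystem (p : Wpairs n) : IsNormalized p.edgeSystem := by
  refine (isNormalized_map_univ_iff _).2
    ⟨fun ⟨A, a, hA⟩ => ?_, #(univ.image (Quotient.mk p.1.1)), ?_⟩
  · exact ⟨_, (p.1.1.mem_blocksMeeting).2 ⟨a, hA ▸ p.1.2.refl a, rfl⟩⟩
  · rw [← p.2.1.image_blockIndex_univ, sup_eq_biUnion]
    ext j
    simp only [mem_biUnion, mem_univ, true_and, Setoid.mem_blocksMeeting, mem_image]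
    exact ⟨fun ⟨_, x, _, hx⟩ => ⟨x, hx⟩,
      fun ⟨x, hx⟩ => ⟨p.1.2.quotientEquivClasses ⟦x⟧, x, by simp, hx⟩⟩

theorem countP_mem_edgeSystem (p : Wpairs n) (j : ℕ) :
    p.edgeSystem.countP (j ∈ ·) = #{x | p.1.1.blockIndex x = j} := by
  rw [edgeSystem, Multiset.countP_map, ← filter_val, ← card_def]
  obtain ⟨⟨Q, P⟩, hQ, hO⟩ := p
  symm
  refine card_bij (fun x _ => P.quotientEquivClasses ⟦x⟧) (fun x hx => ?_)
    (fun x hx y hy hxy => ?_) (fun A hA => ?_)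
  · rw [mem_filter] at hx ⊢
    exact ⟨mem_univ _, Q.mem_blocksMeeting.2 ⟨x, by simp, hx.2⟩⟩
  · rw [mem_filter] at hx hy
    refine orthogonalSetoids_iff.1 hO x y ?_ (hQ.blockIndex_eq_iff.1 (hx.2.trans hy.2.symm))
    exact Quotient.exact (P.quotientEquivClasses.injective hxy)
  · obtain ⟨x, hxA, hx⟩ := Q.mem_blocksMeeting.1 (mem_filter.1 hA).2
    exact ⟨x, mem_filter.2 ⟨mem_univ _, hx⟩, (P.quotientEquivClasses_mk_eq_iff x A).2 hxA⟩

/-- The vertex degrees of the edge system are the block sizes of `Q`, in order, and an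
interval partition is determined by its sequence of block sizes. -/
theorem fst_eq_of_edgeSystem_eq {p q : Wpairs n} (h : p.edgeSystem = q.edgeSystem) :
    p.1.1 = q.1.1 := by
  have hindex : p.1.1.blockIndex = q.1.1.blockIndex :=
    p.1.1.blockIndex_mono.eq_of_card_fiber_eq q.1.1.blockIndex_mono fun j => by
      rw [← countP_mem_edgeSystem, ← countP_mem_edgeSystem, h]
  ext x y
  rw [← p.2.1.blockIndex_eq_iff, ← q.2.1.blockIndex_eq_iff, hindex]

theorem simRel_iff_edgeSystem_eq {p q : Wpairs n} : simRel p q ↔ p.edgeSystem = q.edgeSystem := by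
  constructor
  · rintro ⟨hQ, f, hf, hmeet⟩
    refine (Multiset.map_univ_val_eq_iff_exists_equiv _ _).2 ⟨.ofBijective f hf, fun A => ?_⟩
    rw [Equiv.ofBijective_apply, ← hQ, p.2.1.blocksMeeting_eq_iff]
    exact fun B hB => (hmeet A B hB).symm
  · obtain ⟨⟨Q, P⟩, hQ, -⟩ := p
    obtain ⟨⟨Q', P'⟩, -, -⟩ := q
    intro h
    obtain rfl : Q = Q' := fst_eq_of_edgeSystem_eq h
    obtain ⟨e, he⟩ := (Multiset.map_univ_val_eq_iff_exists_equiv _ _).1 h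
    exact ⟨rfl, e, e.bijective, fun A => (hQ.blocksMeeting_eq_iff _ _).1 (he A).symm⟩

end Wpairs

section Incidences

variable {ι : Type*} [Fintype ι] [LinearOrder ι] (E : ι → Finset ℕ)

/-- Ordered with the vertex first, so that grouping an increasing enumeration by vertex gives an
interval partition. -/
def incidences : Finset (ℕ ×ₗ ι) := univ.biUnion fun i => (E i).image fun j => toLex (j, i)

variable {E}

theorem toLex_mem_incidences {j : ℕ} {i : ι} : toLex (j, i) ∈ incidences E ↔ j ∈ E i := by
  simp [incidences]

theorem card_incidences : #(incidences E) = ∑ i, #(E i) := by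
  rw [incidences, card_biUnion]
  · exact sum_congr rfl fun i _ => card_image_of_injective _ fun j j' h => by simpa using h
  · intro i _ i' _ hii'
    simp only [disjoint_left, mem_image]
    rintro _ ⟨j, -, rfl⟩ ⟨j', -, h⟩
    exact hii' (congrArg (fun x => (ofLex x).2) h).symm

variable {n : ℕ} (hn : #(incidences E) = n)

noncomputable def incidenceEnum (x : Fin n) : ℕ × ι :=
  ofLex ((incidences E).orderEmbOfFin hn x)

theorem monotone_fst_incidenceEnum : Monotone fun x => (incidenceEnum hn x).1 :=
  Prod.Lex.monotone_fst_ofLex.comp (orderEmbOfFin _ hn).monotone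

theorem injective_incidenceEnum : Function.Injective (incidenceEnum hn) :=
  ofLex.injective.comp (orderEmbOfFin _ hn).injective

theorem exists_incidenceEnum_eq_iff {j : ℕ} {i : ι} :
    (∃ x, incidenceEnum hn x = (j, i)) ↔ j ∈ E i := by
  rw [← toLex_mem_incidences, ← mem_coe, ← range_orderEmbOfFin _ hn]
  simp only [incidenceEnum, Set.mem_range]
  exact exists_congr fun x => ofLex.eq_symm_apply.symm

end Incidences

namespace Wpairs

open scoped Classical

variable {ι : Type*} [Fintype ι] [LinearOrder ι] {E : ι → Finset ℕ} {n : ℕ}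

noncomputable def ofIncidences (hn : #(incidences E) = n) : Wpairs n :=
  ⟨(Setoid.ker fun x => (incidenceEnum hn x).1, Setoid.ker fun x => (incidenceEnum hn x).2),
    isIntervalSetoid_ker (monotone_fst_incidenceEnum hn),
    orthogonalSetoids_iff.2 fun _ _ hP hQ => injective_incidenceEnum hn (Prod.ext hQ hP)⟩

theorem edgeSystem_ofIncidences (hn : #(incidences E) = n) (hne : ∀ i, (E i).Nonempty) {m : ℕ}
    (hsup : univ.sup E = Icc 1 m) : (ofIncidences hn).edgeSystem = univ.val.map E := by
  have hrange : univ.image (fun x => (incidenceEnum hn x).1) = Icc 1 m := by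
    ext j
    rw [← hsup, sup_eq_biUnion]
    simp only [mem_image, mem_univ, true_and, mem_biUnion, ← exists_incidenceEnum_eq_iff hn]
    constructor
    · rintro ⟨x, rfl⟩
      exact ⟨_, x, rfl⟩
    · rintro ⟨_, x, hx⟩
      exact ⟨x, congrArg Prod.fst hx⟩
  have hsurj : Function.Surjective fun x => (incidenceEnum hn x).2 := fun i => by
    obtain ⟨x, hx⟩ := (exists_incidenceEnum_eq_iff hn).2 (hne i).choose_spec
    exact ⟨x, congrArg Prod.snd hx⟩
  obtain ⟨e, he⟩ := Setoid.exists_equiv_classes_ker hsurj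
  refine ((Multiset.map_univ_val_eq_iff_exists_equiv _ _).2 ⟨e, fun i => ?_⟩).symm
  ext j
  dsimp only [ofIncidences]
  rw [Setoid.mem_blocksMeeting, he, Setoid.blockIndex_ker (monotone_fst_incidenceEnum hn) hrange,
    ← exists_incidenceEnum_eq_iff hn]
  simp [Prod.ext_iff, and_comm]

theorem exists_edgeSystem_eq {H : Multiset (Finset ℕ)} (hH : IsNormalized H)
    (hw : sysWeight H = n) : ∃ p : Wpairs n, p.edgeSystem = H := by
  obtain ⟨k, E, rfl⟩ : ∃ k, ∃ E : Fin k → Finset ℕ, univ.val.map E = H :=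
    ⟨_, H.toList.get, by rw [Fin.univ_val_map, List.ofFn_get, Multiset.coe_toList]⟩
  obtain ⟨hne, m, hsup⟩ := (isNormalized_map_univ_iff E).1 hH
  rw [sysWeight_map_univ, ← card_incidences] at hw
  exact ⟨ofIncidences hw, edgeSystem_ofIncidences hw hne hsup⟩

end Wpairs

theorem card_quotient_W_eq_hpp_general (n : ℕ) :
    Nat.card (Quot (@simRel n)) = hpp n := by
  let edges : Quot (@simRel n) →
      {H : Multiset (Finset ℕ) // IsNormalized H ∧ sysWeight H = n} :=
    Quot.lift (fun p => ⟨p.edgeSystem, p.isNormalized_edgeSystem, p.sysWeight_edgeSystem⟩)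
      fun _ _ h => Subtype.ext (Wpairs.simRel_iff_edgeSystem_eq.1 h)
  refine Nat.card_eq_of_bijective edges ⟨?_, ?_⟩
  · rintro ⟨p⟩ ⟨q⟩ h
    exact Quot.sound (Wpairs.simRel_iff_edgeSystem_eq.2 (congrArg Subtype.val h))
  · rintro ⟨H, hH, hw⟩
    obtain ⟨p, rfl⟩ := Wpairs.exists_edgeSystem_eq hH hw
    exact ⟨Quot.mk _ p, rfl⟩

/-- For every `n ∈ ℕ = {1,2,…}`, the number of equivalence classes of `W n` under `∼`
equals `hₙ''`, the number of normalized set systems of weight `n`. -/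
theorem card_quotient_W_eq_hpp (n : ℕ) (hn : 1 ≤ n) :
    Nat.card (Quot (@simRel n)) = hpp n :=
  card_quotient_W_eq_hpp_general n
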